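/- A single instance of any lock-free strongly linearizable queue implementation can be used to obtain a wait-free strongly linearizable implementation of the one-shot contest object for n ≥ 2 processes. -/

import Mathlib

set_option autoImplicit false

/-! ## Base objects and primitives -/

/-- A base object: a shared-memory object accessed via atomic primitives.
Responses of primitives are encoded as lists of naturals. -/
structure BaseObject : Type 1 where
  State : Type
  init : State
  Prim : Type
  apply : Prim → State → State × List ℕ

/-- A base object has *interfering* primitives if at any state, the application of
any pair of primitives either commutes or one overwrites the other. -/
def Interfering (B : BaseObject) : Prop :=
  ∀ (f g : B.Prim) (s : B.State),
    (B.apply g (B.apply f s).1).1 = (B.apply f (B.apply g s).1).1 ∨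
    (B.apply f (B.apply g s).1).1 = (B.apply f s).1 ∨
    (B.apply g (B.apply f s).1).1 = (B.apply g s).1

/-- A read/write register: primitive `some v` writes `v`, primitive `none` reads. -/
def RWRegister : BaseObject where
  State := ℕ
  init := 0
  Prim := Option ℕ
  apply := fun p s =>
    match p with
    | some v => (v, [])
    | none => (s, [s])

/-- A `w`-window register stores the sequence of the last `w` values written to it;
`some v` appends `v` (dropping the oldest value if the length exceeds `w`),
`none` reads the stored sequence. -/
def WindowRegister (w : ℕ) : BaseObject where
  State := List ℕ
  init := []
  Prim := Option ℕ
  apply := fun p s =>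
    match p with
    | some v => ((s ++ [v]).drop (s.length + 1 - w), [])
    | none => (s, s)

/-- A test&set object: `T&S()` atomically sets the bit and returns the previous value. -/
def TestAndSet : BaseObject where
  State := Bool
  init := false
  Prim := Unit
  apply := fun _ s => (true, [if s then 1 else 0])

/-! ## Sequential specifications -/

/-- A (possibly nondeterministic) sequential specification for `n` processes.
`δ s i op s' r` holds if process `i` invoking `op` in state `s` may move the object
to state `s'` returning `r`.  `allowed i hist op` says whether process `i`, having
already invoked the operations `hist`, may invoke `op` (used to express one-shot
objects and the referee/competitor roles). -/
structure Spec (n : ℕ) : Type 1 where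
  Op : Type
  Res : Type
  State : Type
  init : State
  δ : State → Fin n → Op → State → Res → Prop
  allowed : Fin n → List Op → Op → Bool

/-- Valid sequential executions of a specification, starting at a given state. -/
inductive SeqRun {n : ℕ} (S : Spec n) : S.State → List (Fin n × S.Op × S.Res) → Prop
  | nil (s : S.State) : SeqRun S s []
  | cons {s : S.State} {i : Fin n} {op : S.Op} {s' : S.State} {r : S.Res}
      {l : List (Fin n × S.Op × S.Res)} :
      S.δ s i op s' r → SeqRun S s' l → SeqRun S s ((i, op, r) :: l)

/-! ## Implementations, configurations and executions -/

/-- Events of an execution: high-level invocations/responses and primitive steps. -/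
inductive Event (n : ℕ) (S : Spec n) : Type
  | inv (i : Fin n) (op : S.Op)
  | res (i : Fin n) (r : S.Res)
  | step (i : Fin n)

/-- The process performing an event. -/
def Event.proc {n : ℕ} {S : Spec n} : Event n S → Fin n
  | .inv i _ => i
  | .res i _ => i
  | .step i => i

/-- An implementation of the high-level object `S` for `n` processes from base objects
`M o`, `o : ι`: a deterministic state machine per process.  In local state `ℓ`,
process `i`'s next primitive step applies `prim i ℓ` to base object `obj i ℓ` and
updates the local state with the response via `updL`; `ret i ℓ` is the response of the
current high-level operation once it is ready. -/
structure Impl (n : ℕ) (S : Spec n) (ι : Type) (M : ι → BaseObject) : Type 1 where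
  Local : Fin n → Type
  initL : ∀ i, Local i
  invokeL : ∀ i, S.Op → Local i → Local i
  obj : ∀ i, Local i → ι
  prim : ∀ i (ℓ : Local i), (M (obj i ℓ)).Prim
  updL : ∀ i, Local i → List ℕ → Local i
  ret : ∀ i, Local i → Option S.Res

/-- A configuration: states of all base objects and all processes
(local state, pending operation, history of invoked operations). -/
structure Config {n : ℕ} {S : Spec n} {ι : Type} {M : ι → BaseObject}
    (A : Impl n S ι M) : Type where
  mem : ∀ o, (M o).State
  loc : ∀ i, A.Local i
  pend : Fin n → Option S.Op
  hist : Fin n → List S.Op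

open Classical in
/-- Update the state of one base object in the memory. -/
noncomputable def updMem {ι : Type} {M : ι → BaseObject}
    (mem : ∀ o, (M o).State) (o : ι) (s : (M o).State) : ∀ o', (M o').State :=
  fun o' =>
    if h : o' = o then cast (congrArg (fun x => (M x).State) h).symm s else mem o'

open Classical in
/-- The (deterministic) transition of a configuration by an event; `none` if the event
is not enabled.  An invocation requires the process to be idle and the operation to be
allowed by the specification; a primitive step requires a pending operation whose
response is not yet ready; a response requires the response to be ready. -/
noncomputable def nextConfig {n : ℕ} {S : Spec n} {ι : Type} {M : ι → BaseObject}
    (A : Impl n S ι M) (C : Config A) : Event n S → Option (Config A)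
  | .inv i op =>
    match C.pend i with
    | some _ => none
    | none =>
      if S.allowed i (C.hist i) op then
        some { C with
          pend := Function.update C.pend i (some op)
          hist := Function.update C.hist i (C.hist i ++ [op])
          loc := Function.update C.loc i (A.invokeL i op (C.loc i)) }
      else none
  | .step i =>
    match C.pend i with
    | none => none
    | some _ =>
      if A.ret i (C.loc i) = none then
        some { C with
          mem := updMem C.mem (A.obj i (C.loc i))
            ((M (A.obj i (C.loc i))).apply (A.prim i (C.loc i))
              (C.mem (A.obj i (C.loc i)))).1
          loc := Function.update C.loc i
            (A.updL i (C.loc i)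
              ((M (A.obj i (C.loc i))).apply (A.prim i (C.loc i))
                (C.mem (A.obj i (C.loc i)))).2) }
      else none
  | .res i r =>
    match C.pend i with
    | none => none
    | some _ =>
      if A.ret i (C.loc i) = some r then
        some { C with pend := Function.update C.pend i none }
      else none

/-- The initial configuration. -/
def initConfig {n : ℕ} {S : Spec n} {ι : Type} {M : ι → BaseObject}
    (A : Impl n S ι M) : Config A :=
  { mem := fun o => (M o).init
    loc := fun i => A.initL i
    pend := fun _ => none
    hist := fun _ => [] }

/-- The configuration reached by a finite sequence of events from the initial
configuration (`none` if the sequence is not a valid execution). -/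
noncomputable def execConfig {n : ℕ} {S : Spec n} {ι : Type} {M : ι → BaseObject}
    (A : Impl n S ι M) (α : List (Event n S)) : Option (Config A) :=
  α.foldlM (fun C e => nextConfig A C e) (initConfig A)

/-- `α` is a (finite) execution of the implementation `A`. -/
def IsExec {n : ℕ} {S : Spec n} {ι : Type} {M : ι → BaseObject}
    (A : Impl n S ι M) (α : List (Event n S)) : Prop :=
  (execConfig A α).isSome = true

/-- The length-`m` prefix of an infinite sequence of events. -/
def prefE {n : ℕ} {S : Spec n} (E : ℕ → Event n S) (m : ℕ) : List (Event n S) :=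
  (List.range m).map E

/-! ## Linearizability -/

/-- In execution `α`, the invocation at position `j` is matched by the response at
position `k` with output `r` (no earlier response of the same process intervening). -/
def Matches {n : ℕ} {S : Spec n} (α : List (Event n S)) (j k : ℕ) (r : S.Res) : Prop :=
  ∃ i op, α[j]? = some (Event.inv i op) ∧ α[k]? = some (Event.res i r) ∧ j < k ∧
    ∀ m, j < m → m < k → ∀ r', α[m]? ≠ some (Event.res i r')

/-- The operation invoked at position `j` precedes (returns before the invocation of)
the operation invoked at position `j'`. -/
def Precedes {n : ℕ} {S : Spec n} (α : List (Event n S)) (j j' : ℕ) : Prop :=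
  ∃ k r, Matches α j k r ∧ k < j'

/-- `σ` is a linearization of the execution `α`: a sequence of operation instances of
`α` (identified by the position of their invocation, paired with a response) that
contains every complete operation of `α` with its actual output and possibly some
pending ones, respects the real-time order of `α`, and is a valid sequential
execution of the specification. -/
structure IsLinearization {n : ℕ} (S : Spec n) (α : List (Event n S))
    (σ : List (ℕ × S.Res)) : Prop where
  inv_mem : ∀ p ∈ σ, ∃ i op, α[p.1]? = some (Event.inv i op)
  nodup : (σ.map Prod.fst).Nodup
  complete_mem : ∀ j k r, Matches α j k r → (j, r) ∈ σ
  complete_out : ∀ j k r r', Matches α j k r → (j, r') ∈ σ → r' = r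
  realtime : σ.Pairwise (fun a b => ¬ Precedes α b.1 a.1)
  valid : ∃ l : List (Fin n × S.Op × S.Res),
    List.Forall₂ (fun (p : ℕ × S.Res) (e : Fin n × S.Op × S.Res) =>
      α[p.1]? = some (Event.inv e.1 e.2.1) ∧ p.2 = e.2.2) σ l ∧
    SeqRun S S.init l

/-- `L` is a linearization function for `A`: it maps every execution to a
linearization of it. -/
def IsLinFun {n : ℕ} {S : Spec n} {ι : Type} {M : ι → BaseObject}
    (A : Impl n S ι M) (L : List (Event n S) → List (ℕ × S.Res)) : Prop :=
  ∀ α, IsExec A α → IsLinearization S α (L α)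

/-- `L` is prefix-closed: the linearization of a prefix is a prefix of the
linearization of an extension. -/
def PrefixClosedLin {n : ℕ} {S : Spec n} {ι : Type} {M : ι → BaseObject}
    (A : Impl n S ι M) (L : List (Event n S) → List (ℕ × S.Res)) : Prop :=
  ∀ α β, IsExec A (α ++ β) → L α <+: L (α ++ β)

/-- `L` is subsequence-closed: the linearization of a prefix is a subsequence of the
linearization of an extension. -/
def SubseqClosedLin {n : ℕ} {S : Spec n} {ι : Type} {M : ι → BaseObject}
    (A : Impl n S ι M) (L : List (Event n S) → List (ℕ × S.Res)) : Prop :=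
  ∀ α β, IsExec A (α ++ β) → List.Sublist (L α) (L (α ++ β))

/-- Strong linearizability: there is a prefix-closed linearization function. -/
def StronglyLinearizable {n : ℕ} {S : Spec n} {ι : Type} {M : ι → BaseObject}
    (A : Impl n S ι M) : Prop :=
  ∃ L, IsLinFun A L ∧ PrefixClosedLin A L

/-- Decisive linearizability: there is a subsequence-closed linearization function. -/
def DecisivelyLinearizable {n : ℕ} {S : Spec n} {ι : Type} {M : ι → BaseObject}
    (A : Impl n S ι M) : Prop :=
  ∃ L, IsLinFun A L ∧ SubseqClosedLin A L

/-! ## Progress conditions -/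

/-- Wait-freedom: in every infinite execution, a process that takes infinitely many
primitive steps completes infinitely many operations. -/
def WaitFree {n : ℕ} {S : Spec n} {ι : Type} {M : ι → BaseObject}
    (A : Impl n S ι M) : Prop :=
  ∀ E : ℕ → Event n S, (∀ m, IsExec A (prefE E m)) →
    ∀ i : Fin n, (∀ m, ∃ m', m ≤ m' ∧ E m' = Event.step i) →
      ∀ m, ∃ m', m ≤ m' ∧ ∃ r, E m' = Event.res i r

/-- Lock-freedom: in every infinite execution, infinitely many operations complete. -/
def LockFree {n : ℕ} {S : Spec n} {ι : Type} {M : ι → BaseObject}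
    (A : Impl n S ι M) : Prop :=
  ∀ E : ℕ → Event n S, (∀ m, IsExec A (prefE E m)) →
    ∀ m, ∃ m', m ≤ m' ∧ ∃ i r, E m' = Event.res i r

/-! ## High-level object specifications -/

/-- Queue: operation `some v` is `enqueue(v)` (returning `none`), operation `none` is
`dequeue()`, returning the oldest enqueued value not yet dequeued (`some v`) or
`none` (empty). -/
def QueueSpec (n : ℕ) : Spec n where
  Op := Option ℕ
  Res := Option ℕ
  State := List ℕ
  init := []
  δ := fun s _ op s' r =>
    (∃ v, op = some v ∧ s' = s ++ [v] ∧ r = none) ∨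
    (op = none ∧ ((s = [] ∧ s' = [] ∧ r = none) ∨ ∃ v t, s = v :: t ∧ s' = t ∧ r = some v))
  allowed := fun _ _ _ => true

/-- Stack: operation `some v` is `push(v)` (returning `none`), operation `none` is
`pop()`, returning the most recently pushed value not yet popped (`some v`) or
`none` (empty). -/
def StackSpec (n : ℕ) : Spec n where
  Op := Option ℕ
  Res := Option ℕ
  State := List ℕ
  init := []
  δ := fun s _ op s' r =>
    (∃ v, op = some v ∧ s' = v :: s ∧ r = none) ∨
    (op = none ∧ ((s = [] ∧ s' = [] ∧ r = none) ∨ ∃ v t, s = v :: t ∧ s' = t ∧ r = some v))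
  allowed := fun _ _ _ => true

/-- Operations of the (one-shot or long-lived) contest objects. -/
inductive ContestOp : Type
  | compete
  | decide

/-- The one-shot contest object for `n` processes: each competitor `p_1, …, p_{n-1}`
may invoke `compete()` once, which always returns `true`; the referee `p_0` may invoke
`decide()` once, which returns the index of the first process that executed
`compete()` (`Sum.inr i`) or `false` (`Sum.inl false`) if there is no such operation. -/
def ContestSpec (n : ℕ) : Spec n where
  Op := ContestOp
  Res := Bool ⊕ ℕ
  State := Option (Fin n) × Bool
  init := (none, false)
  δ := fun s i op s' r =>
    (op = ContestOp.compete ∧ i.val ≠ 0 ∧ r = Sum.inl true ∧ s'.2 = s.2 ∧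
      s'.1 = (match s.1 with | some j => some j | none => some i)) ∨
    (op = ContestOp.decide ∧ i.val = 0 ∧ s.2 = false ∧ s' = (s.1, true) ∧
      r = (match s.1 with | some j => Sum.inr j.val | none => Sum.inl false))
  allowed := fun i hist op =>
    hist.isEmpty &&
      (match op with
       | ContestOp.compete => i.val != 0
       | ContestOp.decide => i.val == 0)

/-- The long-lived contest object for `n` processes: each competitor `p_1, …, p_{n-1}`
may invoke `compete()` any number of times (returning nothing, i.e. `none`); the
referee `p_0` may invoke `decide()` at most once, which returns `some x` for some
integer `x` such that every competitor has executed at most `x` operations so far. -/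
def LLContestSpec (n : ℕ) : Spec n where
  Op := ContestOp
  Res := Option ℕ
  State := (Fin n → ℕ) × Bool
  init := (fun _ => 0, false)
  δ := fun s i op s' r =>
    (op = ContestOp.compete ∧ i.val ≠ 0 ∧
      s' = (Function.update s.1 i (s.1 i + 1), s.2) ∧ r = none) ∨
    (op = ContestOp.decide ∧ i.val = 0 ∧ s.2 = false ∧ s'.2 = true ∧ s'.1 = s.1 ∧
      ∃ x : ℕ, r = some x ∧ ∀ j : Fin n, j.val ≠ 0 → s.1 j ≤ x)
  allowed := fun i hist op =>
    match op with
    | ContestOp.compete => i.val != 0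
    | ContestOp.decide => (i.val == 0) && hist.isEmpty

/-- Counter: operation `true` is `increment()` (returning `none`), operation `false`
is `read()`, returning the number of increments so far. -/
def CounterSpec (n : ℕ) : Spec n where
  Op := Bool
  Res := Option ℕ
  State := ℕ
  init := 0
  δ := fun s _ op s' r =>
    (op = true ∧ s' = s + 1 ∧ r = none) ∨ (op = false ∧ s' = s ∧ r = some s)
  allowed := fun _ _ _ => true

/-- Max register: operation `some v` is `maxWrite(v)` (returning `none`), operation
`none` is `maxRead()`, returning the largest value written so far. -/
def MaxRegSpec (n : ℕ) : Spec n where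
  Op := Option ℕ
  Res := Option ℕ
  State := ℕ
  init := 0
  δ := fun s _ op s' r =>
    (∃ v, op = some v ∧ s' = max s v ∧ r = none) ∨ (op = none ∧ s' = s ∧ r = some s)
  allowed := fun _ _ _ => true

/-- Snapshot with `n` components: operation `Sum.inl (j, v)` atomically updates
component `j` to `v` (returning `none`); operation `Sum.inr ()` is `scan()`,
atomically returning all components. -/
def SnapshotSpec (n : ℕ) : Spec n where
  Op := (Fin n × ℕ) ⊕ Unit
  Res := Option (Fin n → ℕ)
  State := Fin n → ℕ
  init := fun _ => 0
  δ := fun s _ op s' r =>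
    (∃ j v, op = Sum.inl (j, v) ∧ s' = Function.update s j v ∧ r = none) ∨
    (op = Sum.inr () ∧ s' = s ∧ r = some s)
  allowed := fun _ _ _ => true

/-- Fetch&increment: atomically returns the current value and increments it. -/
def FetchIncSpec (n : ℕ) : Spec n where
  Op := Unit
  Res := ℕ
  State := ℕ
  init := 0
  δ := fun s _ _ s' r => s' = s + 1 ∧ r = s
  allowed := fun _ _ _ => true

/-- Fetch&add: `fetch&add(v)` atomically returns the current value and adds `v`. -/
def FetchAddSpec (n : ℕ) : Spec n where
  Op := ℕ
  Res := ℕ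
  State := ℕ
  init := 0
  δ := fun s _ op s' r => s' = s + op ∧ r = s
  allowed := fun _ _ _ => true

/-!
Competitor `p_i` enqueues `i` and the referee dequeues, reporting the dequeued index (or
`false` on `empty`).  Every execution of this contest implementation is, event for event, an
execution of the queue implementation with operations and responses relabelled, so the queue's
prefix-closed linearization function, relabelled, linearizes the contest: until the referee's
dequeue, the head of the linearized queue is the first competitor to have enqueued.  Lock-freedom
transfers along the same simulation, and a lock-free implementation of a one-shot object is
wait-free, because an infinite execution would need infinitely many responses while each process
responds at most once.
-/

namespace List

variable {α β : Type*}

theorem Forall₂.exists_getElem?_left {R : α → β → Prop} {l₁ : List α} {l₂ : List β}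
    (h : Forall₂ R l₁ l₂) {j : ℕ} {x : α} (hx : l₁[j]? = some x) :
    ∃ y, l₂[j]? = some y ∧ R x y := by
  induction h generalizing j with
  | nil => simp at hx
  | cons hab _ ih =>
    cases j with
    | zero =>
      simp only [getElem?_cons_zero, Option.some.injEq] at hx
      exact ⟨_, rfl, hx ▸ hab⟩
    | succ j => exact ih (by simpa using hx)

theorem Forall₂.exists_getElem?_right {R : α → β → Prop} {l₁ : List α} {l₂ : List β}
    (h : Forall₂ R l₁ l₂) {j : ℕ} {y : β} (hy : l₂[j]? = some y) :
    ∃ x, l₁[j]? = some x ∧ R x y :=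
  Forall₂.exists_getElem?_left (R := _root_.flip R) (Forall₂.flip (R := _root_.flip R) h) hy

theorem Forall₂.exists_mem_left {R : α → β → Prop} {l₁ : List α} {l₂ : List β}
    (h : Forall₂ R l₁ l₂) {y : β} (hy : y ∈ l₂) : ∃ x ∈ l₁, R x y := by
  induction h with
  | nil => simp at hy
  | @cons a b _ _ hab _ ih =>
    rcases mem_cons.mp hy with rfl | hy
    · exact ⟨a, mem_cons_self, hab⟩
    · obtain ⟨x, hx, hxy⟩ := ih hy
      exact ⟨x, mem_cons_of_mem _ hx, hxy⟩

theorem Forall₂.pairwise {R : α → β → Prop} {P : α → α → Prop}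
    {Q : β → β → Prop} {l₁ : List α} {l₂ : List β} (h : Forall₂ R l₁ l₂)
    (hP : l₁.Pairwise P)
    (hPQ : ∀ a b x y, R a x → R b y → P a b → Q x y) : l₂.Pairwise Q := by
  induction h with
  | nil => exact Pairwise.nil
  | @cons a x _ _ hax hrest ih =>
    rw [pairwise_cons] at hP ⊢
    refine ⟨fun y hy => ?_, ih hP.2⟩
    obtain ⟨b, hb, hby⟩ := hrest.exists_mem_left hy
    exact hPQ a b x y hax hby (hP.1 b hb)

theorem two_le_countP_of_getElem? {l : List α} {p : α → Bool} {j k : ℕ} (hjk : j < k)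
    {x y : α} (hj : l[j]? = some x) (hk : l[k]? = some y) (hx : p x) (hy : p y) :
    2 ≤ l.countP p := by
  have hx' : x ∈ l.take (j + 1) := mem_of_getElem? (i := j) (by simp [hj])
  have hy' : y ∈ l.drop (j + 1) :=
    mem_of_getElem? (i := k - (j + 1)) (by rwa [getElem?_drop, Nat.add_sub_cancel' hjk])
  have h₁ := countP_pos_iff.mpr ⟨x, hx', hx⟩
  have h₂ := countP_pos_iff.mpr ⟨y, hy', hy⟩
  rw [← take_append_drop (j + 1) l, countP_append]
  omega

theorem eq_of_countP_le_one {l : List α} {p : α → Bool} (h : l.countP p ≤ 1) {j k : ℕ}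
    {x y : α} (hj : l[j]? = some x) (hk : l[k]? = some y) (hx : p x) (hy : p y) : j = k := by
  rcases lt_trichotomy j k with hjk | hjk | hjk
  · have := two_le_countP_of_getElem? hjk hj hk hx hy; omega
  · exact hjk
  · have := two_le_countP_of_getElem? hjk hk hj hy hx; omega

end List

section Executions

variable {n : ℕ} {S : Spec n} {ι : Type} {M : ι → BaseObject} {A : Impl n S ι M}

open Function

theorem nextConfig_inv_eq_some {C C' : Config A} {i : Fin n} {op : S.Op} :
    nextConfig A C (.inv i op) = some C' ↔
      C.pend i = none ∧ S.allowed i (C.hist i) op = true ∧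
      C' = { C with
        pend := update C.pend i (some op)
        hist := update C.hist i (C.hist i ++ [op])
        loc := update C.loc i (A.invokeL i op (C.loc i)) } := by
  simp only [nextConfig]
  cases C.pend i <;> simp only [reduceCtorEq, false_and, true_and]
  split_ifs with h
  · simp [h, eq_comm]
  · simp [h]

theorem nextConfig_step_eq_some {C C' : Config A} {i : Fin n} :
    nextConfig A C (.step i) = some C' ↔
      (C.pend i).isSome ∧ A.ret i (C.loc i) = none ∧
      C' = { C with
        mem := updMem C.mem (A.obj i (C.loc i))
          ((M (A.obj i (C.loc i))).apply (A.prim i (C.loc i)) (C.mem (A.obj i (C.loc i)))).1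
        loc := update C.loc i (A.updL i (C.loc i)
          ((M (A.obj i (C.loc i))).apply (A.prim i (C.loc i))
            (C.mem (A.obj i (C.loc i)))).2) } := by
  simp only [nextConfig]
  cases C.pend i <;> simp only [reduceCtorEq, false_and, Option.isSome_none, Option.isSome_some,
    Bool.false_eq_true, true_and]
  split_ifs with h
  · simp [h, eq_comm]
  · simp [h]

theorem nextConfig_res_eq_some {C C' : Config A} {i : Fin n} {r : S.Res} :
    nextConfig A C (.res i r) = some C' ↔
      (C.pend i).isSome ∧ A.ret i (C.loc i) = some r ∧
      C' = { C with pend := update C.pend i none } := by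
  simp only [nextConfig]
  cases C.pend i <;> simp only [reduceCtorEq, false_and, Option.isSome_none, Option.isSome_some,
    Bool.false_eq_true, true_and]
  split_ifs with h
  · simp [h, eq_comm]
  · simp [h]

theorem execConfig_append (α β : List (Event n S)) :
    execConfig A (α ++ β) =
      (execConfig A α).bind (fun C => β.foldlM (fun C e => nextConfig A C e) C) := by
  simp only [execConfig, List.foldlM_append]
  rfl

theorem execConfig_append_singleton (α : List (Event n S)) (e : Event n S) :
    execConfig A (α ++ [e]) = (execConfig A α).bind (fun C => nextConfig A C e) := by
  simp [execConfig_append]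

theorem IsExec.exists_execConfig {α : List (Event n S)} (h : IsExec A α) :
    ∃ C, execConfig A α = some C :=
  Option.isSome_iff_exists.mp h

theorem IsExec.of_append {α β : List (Event n S)} (h : IsExec A (α ++ β)) : IsExec A α := by
  obtain ⟨C, hC⟩ := h.exists_execConfig
  rw [execConfig_append] at hC
  obtain ⟨D, hD, -⟩ := Option.bind_eq_some_iff.mp hC
  simp [IsExec, hD]

theorem IsExec.allowed_of_getElem? {α : List (Event n S)} (h : IsExec A α) {j : ℕ} {i : Fin n}
    {op : S.Op} (hj : α[j]? = some (.inv i op)) : ∃ hist, S.allowed i hist op = true := by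
  have hpre : IsExec A (α.take j ++ [.inv i op]) := by
    rw [← List.take_append_drop (j + 1) α, List.take_add_one, hj] at h
    exact h.of_append
  obtain ⟨C', hC'⟩ := hpre.exists_execConfig
  rw [execConfig_append_singleton] at hC'
  obtain ⟨C, -, hC⟩ := Option.bind_eq_some_iff.mp hC'
  exact ⟨_, (nextConfig_inv_eq_some.mp hC).2.1⟩

theorem prefE_succ (E : ℕ → Event n S) (m : ℕ) : prefE E (m + 1) = prefE E m ++ [E m] := by
  simp [prefE, List.range_succ]

theorem getElem?_prefE (E : ℕ → Event n S) {m k : ℕ} (h : m < k) :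
    (prefE E k)[m]? = some (E m) := by
  simp [prefE, h]

theorem execConfig_induction {P : List (Event n S) → Config A → Prop}
    (h₀ : P [] (initConfig A))
    (hstep : ∀ α e C C', P α C → nextConfig A C e = some C' → P (α ++ [e]) C')
    {α : List (Event n S)} {C : Config A} (h : execConfig A α = some C) : P α C := by
  induction α using List.reverseRecOn generalizing C with
  | nil => exact Option.some.inj h ▸ h₀
  | append_singleton α e ih =>
    rw [execConfig_append_singleton] at h
    obtain ⟨C₀, hC₀, hC⟩ := Option.bind_eq_some_iff.mp h
    exact hstep α e C₀ C (ih hC₀) hC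

def Event.isInvOf (i : Fin n) : Event n S → Bool
  | .inv j _ => j == i
  | _ => false

def Event.isResOf (i : Fin n) : Event n S → Bool
  | .res j _ => j == i
  | _ => false

theorem countP_isInvOf_eq_length_hist {α : List (Event n S)} {C : Config A}
    (h : execConfig A α = some C) (i : Fin n) :
    α.countP (Event.isInvOf i) = (C.hist i).length := by
  refine execConfig_induction (P := fun α C => α.countP (Event.isInvOf i) = (C.hist i).length)
    rfl (fun α e C C' ih he => ?_) h
  rw [List.countP_append, ih]
  cases e with
  | inv j op =>
    obtain ⟨-, -, rfl⟩ := nextConfig_inv_eq_some.mp he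
    by_cases hj : j = i
    · subst hj; simp [Event.isInvOf]
    · simp [Event.isInvOf, hj, update_of_ne (Ne.symm hj)]
  | step j =>
    obtain ⟨-, -, rfl⟩ := nextConfig_step_eq_some.mp he
    simp [Event.isInvOf]
  | res j r =>
    obtain ⟨-, -, rfl⟩ := nextConfig_res_eq_some.mp he
    simp [Event.isInvOf]

theorem countP_isResOf_add_isSome_pend {α : List (Event n S)} {C : Config A}
    (h : execConfig A α = some C) (i : Fin n) :
    α.countP (Event.isResOf i) + (C.pend i).isSome.toNat = α.countP (Event.isInvOf i) := by
  refine execConfig_induction (P := fun α C =>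
    α.countP (Event.isResOf i) + (C.pend i).isSome.toNat = α.countP (Event.isInvOf i))
    rfl (fun α e C C' ih he => ?_) h
  simp only [List.countP_append]
  cases e with
  | inv j op =>
    obtain ⟨hp, -, rfl⟩ := nextConfig_inv_eq_some.mp he
    by_cases hj : j = i
    · subst hj; simp_all [Event.isInvOf, Event.isResOf]
    · simp_all [Event.isInvOf, Event.isResOf, update_of_ne (Ne.symm hj)]
  | step j =>
    obtain ⟨-, -, rfl⟩ := nextConfig_step_eq_some.mp he
    simp_all [Event.isInvOf, Event.isResOf]
  | res j r =>
    obtain ⟨hp, -, rfl⟩ := nextConfig_res_eq_some.mp he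
    by_cases hj : j = i
    · subst hj; simp_all [Event.isInvOf, Event.isResOf]
    · simp_all [Event.isInvOf, Event.isResOf, update_of_ne (Ne.symm hj)]

def Spec.OneShot (S : Spec n) : Prop :=
  ∀ i hist op, S.allowed i hist op = true → hist = []

theorem Spec.OneShot.length_hist_le_one (hS : S.OneShot) {α : List (Event n S)} {C : Config A}
    (h : execConfig A α = some C) (i : Fin n) : (C.hist i).length ≤ 1 := by
  refine execConfig_induction (P := fun _ C => (C.hist i).length ≤ 1)
    (by simp [initConfig]) (fun α e C C' ih he => ?_) h
  cases e with
  | inv j op =>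
    obtain ⟨-, hall, rfl⟩ := nextConfig_inv_eq_some.mp he
    by_cases hj : j = i
    · subst hj; simp [hS _ _ _ hall]
    · simpa [update_of_ne (Ne.symm hj)] using ih
  | step j => obtain ⟨-, -, rfl⟩ := nextConfig_step_eq_some.mp he; exact ih
  | res j r => obtain ⟨-, -, rfl⟩ := nextConfig_res_eq_some.mp he; exact ih

theorem Spec.OneShot.countP_isInvOf_le_one (hS : S.OneShot) {α : List (Event n S)}
    (h : IsExec A α) (i : Fin n) : α.countP (Event.isInvOf i) ≤ 1 := by
  obtain ⟨C, hC⟩ := h.exists_execConfig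
  exact countP_isInvOf_eq_length_hist hC i ▸ hS.length_hist_le_one hC i

theorem Spec.OneShot.countP_isResOf_le_one (hS : S.OneShot) {α : List (Event n S)}
    (h : IsExec A α) (i : Fin n) : α.countP (Event.isResOf i) ≤ 1 := by
  obtain ⟨C, hC⟩ := h.exists_execConfig
  have := countP_isResOf_add_isSome_pend hC i
  have := hS.countP_isInvOf_le_one h i
  omega

theorem Spec.OneShot.eq_of_getElem?_inv (hS : S.OneShot) {α : List (Event n S)} (h : IsExec A α)
    {i : Fin n} {j k : ℕ} {op op' : S.Op} (hj : α[j]? = some (.inv i op))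
    (hk : α[k]? = some (.inv i op')) : j = k :=
  List.eq_of_countP_le_one (hS.countP_isInvOf_le_one h i) hj hk (by simp [Event.isInvOf])
    (by simp [Event.isInvOf])

theorem Spec.OneShot.eq_of_getElem?_res (hS : S.OneShot) {α : List (Event n S)} (h : IsExec A α)
    {i : Fin n} {j k : ℕ} {r r' : S.Res} (hj : α[j]? = some (.res i r))
    (hk : α[k]? = some (.res i r')) : j = k :=
  List.eq_of_countP_le_one (hS.countP_isResOf_le_one h i) hj hk (by simp [Event.isResOf])
    (by simp [Event.isResOf])

theorem Spec.OneShot.finite_setOf_res (hS : S.OneShot) {E : ℕ → Event n S}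
    (hE : ∀ m, IsExec A (prefE E m)) : {m | ∃ i r, E m = .res i r}.Finite := by
  have hsub : ∀ i, {m | ∃ r, E m = .res i r}.Subsingleton := by
    rintro i m₁ ⟨r₁, h₁⟩ m₂ ⟨r₂, h₂⟩
    have hlt₁ : m₁ < max m₁ m₂ + 1 := by omega
    have hlt₂ : m₂ < max m₁ m₂ + 1 := by omega
    exact hS.eq_of_getElem?_res (hE _) (by rw [getElem?_prefE E hlt₁, h₁])
      (by rw [getElem?_prefE E hlt₂, h₂])
  refine (Set.finite_iUnion fun i => (hsub i).finite).subset ?_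
  rintro m ⟨i, r, h⟩
  exact Set.mem_iUnion.mpr ⟨i, r, h⟩

/-- Holds vacuously: lock-freedom leaves a one-shot object no infinite execution. -/
theorem Spec.OneShot.waitFree_of_lockFree (hS : S.OneShot) (hA : LockFree A) : WaitFree A := by
  intro E hE
  obtain ⟨b, hb⟩ := (hS.finite_setOf_res hE).bddAbove
  obtain ⟨m, hm, i, r, hr⟩ := hA E hE (b + 1)
  have := hb ⟨i, r, hr⟩
  omega

end Executions

structure Spec.Translation {n : ℕ} (S' S : Spec n) where
  op : Fin n → S'.Op → S.Op
  res : Fin n → S.Res → S'.Res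
  allowed_op : ∀ i hist o, S'.allowed i hist o = true →
    S.allowed i (hist.map (op i)) (op i o) = true

section Translation

variable {n : ℕ} {S S' : Spec n} {ι : Type} {M : ι → BaseObject}

def Impl.translate (B : Impl n S ι M) (T : Spec.Translation S' S) : Impl n S' ι M where
  Local := B.Local
  initL := B.initL
  invokeL i op := B.invokeL i (T.op i op)
  obj := B.obj
  prim := B.prim
  updL := B.updL
  ret i ℓ := (B.ret i ℓ).map (T.res i)

inductive Spec.Translation.EventRel (T : Spec.Translation S' S) : Event n S' → Event n S → Prop
  | inv (i : Fin n) (op : S'.Op) : T.EventRel (.inv i op) (.inv i (T.op i op))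
  | step (i : Fin n) : T.EventRel (.step i) (.step i)
  | res (i : Fin n) (r : S.Res) : T.EventRel (.res i (T.res i r)) (.res i r)

variable {B : Impl n S ι M} {T : Spec.Translation S' S}

def Config.toBase (C : Config (B.translate T)) : Config B where
  mem := C.mem
  loc := C.loc
  pend i := (C.pend i).map (T.op i)
  hist i := (C.hist i).map (T.op i)

/-- The fallback `.step i` is never taken in an execution. -/
def Config.baseEvent (C : Config (B.translate T)) : Event n S' → Event n S
  | .inv i op => .inv i (T.op i op)
  | .step i => .step i
  | .res i _ => (B.ret i (C.loc i)).elim (.step i) (.res i)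

open Function in
theorem Config.nextConfig_toBase_baseEvent {C C' : Config (B.translate T)} {e : Event n S'}
    (h : nextConfig _ C e = some C') :
    nextConfig B C.toBase (C.baseEvent e) = some C'.toBase ∧ T.EventRel e (C.baseEvent e) := by
  cases e with
  | inv i op =>
    obtain ⟨hp, hall, rfl⟩ := nextConfig_inv_eq_some.mp h
    refine ⟨nextConfig_inv_eq_some.mpr ⟨by simp [toBase, hp], T.allowed_op _ _ _ hall, ?_⟩,
      .inv i op⟩
    simp only [toBase]
    congr 1 <;> funext j
    · exact apply_update (fun k (o : Option S'.Op) => o.map (T.op k)) _ _ _ _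
    · rw [apply_update (fun k (l : List S'.Op) => l.map (T.op k))]
      simp
  | step i =>
    obtain ⟨hp, hret, rfl⟩ := nextConfig_step_eq_some.mp h
    refine ⟨nextConfig_step_eq_some.mpr ⟨by simpa [toBase] using hp, ?_, rfl⟩, .step i⟩
    simpa [Impl.translate, toBase] using hret
  | res i r =>
    obtain ⟨hp, hret, rfl⟩ := nextConfig_res_eq_some.mp h
    obtain ⟨rB, hrB, rfl⟩ := Option.map_eq_some_iff.mp hret
    have : C.baseEvent (.res i (T.res i rB)) = .res i rB := by simp [baseEvent, hrB]
    rw [this]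
    refine ⟨nextConfig_res_eq_some.mpr ⟨by simpa [toBase] using hp, hrB, ?_⟩, .res i rB⟩
    simp only [toBase]
    congr 1
    funext j
    exact apply_update (fun k (o : Option S'.Op) => o.map (T.op k)) _ _ _ _

noncomputable def Config.baseExec :
    Config (B.translate T) → List (Event n S') → List (Event n S)
  | _, [] => []
  | C, e :: α => C.baseEvent e :: ((nextConfig _ C e).getD C).baseExec α

theorem Config.baseExec_cons {C C' : Config (B.translate T)} {e : Event n S'}
    (h : nextConfig _ C e = some C') (α : List (Event n S')) :
    C.baseExec (e :: α) = C.baseEvent e :: C'.baseExec α := by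
  simp [baseExec, h]

theorem Config.foldlM_baseExec {α : List (Event n S')} {C D : Config (B.translate T)}
    (h : α.foldlM (fun C e => nextConfig _ C e) C = some D) :
    (C.baseExec α).foldlM (fun C e => nextConfig B C e) C.toBase = some D.toBase ∧
      List.Forall₂ T.EventRel α (C.baseExec α) := by
  induction α generalizing C with
  | nil => obtain rfl := Option.some.inj h; exact ⟨rfl, .nil⟩
  | cons e α ih =>
    obtain ⟨C', hC', h⟩ := Option.bind_eq_some_iff.mp h
    obtain ⟨hstep, hrel⟩ := nextConfig_toBase_baseEvent hC'
    obtain ⟨hfold, hF⟩ := ih h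
    rw [baseExec_cons hC']
    exact ⟨by simpa [hstep] using hfold, .cons hrel hF⟩

theorem Config.baseExec_append {α : List (Event n S')} {C D : Config (B.translate T)}
    (h : α.foldlM (fun C e => nextConfig _ C e) C = some D) (β : List (Event n S')) :
    C.baseExec (α ++ β) = C.baseExec α ++ D.baseExec β := by
  induction α generalizing C with
  | nil => obtain rfl := Option.some.inj h; rfl
  | cons e α ih =>
    obtain ⟨C', hC', h⟩ := Option.bind_eq_some_iff.mp h
    rw [List.cons_append, baseExec_cons hC', baseExec_cons hC', ih h, List.cons_append]

variable (B T) in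
noncomputable def Impl.baseExec (α : List (Event n S')) : List (Event n S) :=
  (initConfig (B.translate T)).baseExec α

theorem IsExec.baseExec {α : List (Event n S')} (h : IsExec (B.translate T) α) :
    IsExec B (B.baseExec T α) ∧ List.Forall₂ T.EventRel α (B.baseExec T α) := by
  obtain ⟨D, hD⟩ := h.exists_execConfig
  obtain ⟨hfold, hF⟩ := Config.foldlM_baseExec hD
  refine ⟨?_, hF⟩
  unfold IsExec execConfig Impl.baseExec
  rw [show initConfig B = (initConfig (B.translate T)).toBase from rfl, hfold]
  rfl

namespace Spec.Translation.EventRel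

variable {α : List (Event n S')} {α' : List (Event n S)} {j : ℕ} {i : Fin n}

theorem getElem?_inv (hF : List.Forall₂ T.EventRel α α') {op : S'.Op}
    (hj : α[j]? = some (.inv i op)) : α'[j]? = some (.inv i (T.op i op)) := by
  obtain ⟨e, he, hrel⟩ := hF.exists_getElem?_left hj
  cases hrel
  exact he

theorem getElem?_inv_rev (hF : List.Forall₂ T.EventRel α α') {q : S.Op}
    (hj : α'[j]? = some (.inv i q)) : ∃ op, α[j]? = some (.inv i op) ∧ q = T.op i op := by
  obtain ⟨e, he, hrel⟩ := hF.exists_getElem?_right hj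
  cases hrel
  exact ⟨_, he, rfl⟩

theorem getElem?_res (hF : List.Forall₂ T.EventRel α α') {r : S'.Res}
    (hj : α[j]? = some (.res i r)) : ∃ rB, α'[j]? = some (.res i rB) ∧ r = T.res i rB := by
  obtain ⟨e, he, hrel⟩ := hF.exists_getElem?_left hj
  cases hrel
  exact ⟨_, he, rfl⟩

theorem getElem?_res_rev (hF : List.Forall₂ T.EventRel α α') {rB : S.Res}
    (hj : α'[j]? = some (.res i rB)) : α[j]? = some (.res i (T.res i rB)) := by
  obtain ⟨e, he, hrel⟩ := hF.exists_getElem?_right hj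
  cases hrel
  exact he

theorem exists_matches (hF : List.Forall₂ T.EventRel α α') {k : ℕ} {r : S'.Res}
    (hm : Matches α j k r) :
    ∃ i op rB, α[j]? = some (.inv i op) ∧ r = T.res i rB ∧ Matches α' j k rB := by
  obtain ⟨i, op, hj, hk, hjk, hmid⟩ := hm
  obtain ⟨rB, hk', rfl⟩ := getElem?_res hF hk
  exact ⟨i, op, rB, hj, rfl, i, _, getElem?_inv hF hj, hk', hjk,
    fun m h₁ h₂ r' hm' => hmid m h₁ h₂ _ (getElem?_res_rev hF hm')⟩

theorem exists_matches_rev (hF : List.Forall₂ T.EventRel α α') {k : ℕ} {rB : S.Res}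
    (hm : Matches α' j k rB) :
    ∃ i op, α[j]? = some (.inv i op) ∧ Matches α j k (T.res i rB) := by
  obtain ⟨i, q, hj, hk, hjk, hmid⟩ := hm
  obtain ⟨op, hj', -⟩ := getElem?_inv_rev hF hj
  refine ⟨i, op, hj', i, op, hj', getElem?_res_rev hF hk, hjk, fun m h₁ h₂ r' hm' => ?_⟩
  obtain ⟨rB', hm'', -⟩ := getElem?_res hF hm'
  exact hmid m h₁ h₂ rB' hm''

theorem precedes_iff (hF : List.Forall₂ T.EventRel α α') {a b : ℕ} :
    Precedes α a b ↔ Precedes α' a b := by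
  constructor
  · rintro ⟨k, r, hm, hk⟩
    obtain ⟨_, _, _, -, -, hm'⟩ := exists_matches hF hm
    exact ⟨k, _, hm', hk⟩
  · rintro ⟨k, r, hm, hk⟩
    obtain ⟨_, _, -, hm'⟩ := exists_matches_rev hF hm
    exact ⟨k, _, hm', hk⟩

end Spec.Translation.EventRel

theorem LockFree.translate (hB : LockFree B) : LockFree (B.translate T) := by
  intro E hE m
  let E' (m : ℕ) : Event n S :=
    ((execConfig _ (prefE E m)).getD (initConfig (B.translate T))).baseEvent (E m)
  have hpref : ∀ m, prefE E' m = B.baseExec T (prefE E m) := by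
    intro m
    induction m with
    | zero => rfl
    | succ m ih =>
      obtain ⟨D, hD⟩ := (hE m).exists_execConfig
      rw [prefE_succ, prefE_succ, ih]
      unfold Impl.baseExec
      rw [Config.baseExec_append hD]
      simp [E', hD, Config.baseExec]
  obtain ⟨m', hm', i, r, hr⟩ := hB E' (fun m => hpref m ▸ (hE m).baseExec.1) m
  have hm'' : (B.baseExec T (prefE E (m' + 1)))[m']? = some (.res i r) := by
    rw [← hpref, getElem?_prefE E' (Nat.lt_succ_self m'), hr]
  have := Spec.Translation.EventRel.getElem?_res_rev (hE (m' + 1)).baseExec.2 hm''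
  rw [getElem?_prefE E (Nat.lt_succ_self m')] at this
  exact ⟨m', hm', i, _, Option.some.inj this⟩

section Linearization

variable [Inhabited S'.Res]

/-- The `default` branch is never taken: every entry of a linearization sits at an
invocation. -/
def Spec.Translation.linEntry (T : Spec.Translation S' S) (α : List (Event n S'))
    (p : ℕ × S.Res) : ℕ × S'.Res :=
  (p.1, match α[p.1]? with
    | some (.inv i _) => T.res i p.2
    | _ => default)

theorem Spec.Translation.linEntry_of_getElem? {α : List (Event n S')} {p : ℕ × S.Res}
    {i : Fin n} {op : S'.Op} (hp : α[p.1]? = some (.inv i op)) :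
    T.linEntry α p = (p.1, T.res i p.2) := by
  simp [linEntry, hp]

variable (B T) in
noncomputable def Impl.translateLin (LB : List (Event n S) → List (ℕ × S.Res))
    (α : List (Event n S')) : List (ℕ × S'.Res) :=
  (LB (B.baseExec T α)).map (T.linEntry α)

theorem Spec.Translation.isLinearization_map_linEntry {α : List (Event n S')}
    {α' : List (Event n S)} {σ : List (ℕ × S.Res)} (hF : List.Forall₂ T.EventRel α α')
    (H : IsLinearization S α' σ)
    (hvalid : ∃ l : List (Fin n × S'.Op × S'.Res),
      List.Forall₂ (fun p e => α[p.1]? = some (.inv e.1 e.2.1) ∧ p.2 = e.2.2)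
        (σ.map (T.linEntry α)) l ∧ SeqRun S' S'.init l) :
    IsLinearization S' α (σ.map (T.linEntry α)) where
  inv_mem := by
    simp only [List.mem_map]
    rintro _ ⟨p, hp, rfl⟩
    obtain ⟨i, q, hq⟩ := H.inv_mem p hp
    obtain ⟨op, hop, -⟩ := EventRel.getElem?_inv_rev hF hq
    exact ⟨i, op, hop⟩
  nodup := by
    rw [List.map_map]
    exact H.nodup
  complete_mem j k r hm := by
    obtain ⟨i, op, rB, hj, rfl, hm'⟩ := EventRel.exists_matches hF hm
    exact List.mem_map.mpr ⟨(j, rB), H.complete_mem j k rB hm', linEntry_of_getElem? hj⟩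
  complete_out j k r r' hm hmem := by
    obtain ⟨i, op, rB, hj, rfl, hm'⟩ := EventRel.exists_matches hF hm
    obtain ⟨⟨j', rB'⟩, hmem', heq⟩ := List.mem_map.mp hmem
    obtain rfl : j' = j := congrArg Prod.fst heq
    rw [linEntry_of_getElem? hj, H.complete_out _ k rB rB' hm' hmem'] at heq
    exact (congrArg Prod.snd heq).symm
  realtime := by
    rw [List.pairwise_map]
    exact H.realtime.imp fun hab hprec => hab ((EventRel.precedes_iff hF).mp hprec)
  valid := hvalid

theorem Impl.prefixClosedLin_translateLin {LB : List (Event n S) → List (ℕ × S.Res)}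
    (hLB : IsLinFun B LB) (hpc : PrefixClosedLin B LB) :
    PrefixClosedLin (B.translate T) (B.translateLin T LB) := by
  intro α β h
  obtain ⟨D, hD⟩ := h.of_append.exists_execConfig
  have happ : B.baseExec T (α ++ β) = B.baseExec T α ++ D.baseExec β :=
    Config.baseExec_append hD β
  obtain ⟨tl, htl⟩ := hpc _ _ (happ ▸ h.baseExec.1)
  obtain ⟨hφ, hF⟩ := h.of_append.baseExec
  have hagree : ∀ p ∈ LB (B.baseExec T α), T.linEntry α p = T.linEntry (α ++ β) p := by
    intro p hp
    obtain ⟨i, q, hq⟩ := (hLB _ hφ).inv_mem p hp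
    obtain ⟨op, hop, -⟩ := Spec.Translation.EventRel.getElem?_inv_rev hF hq
    have hlt : p.1 < α.length := (List.getElem?_eq_some_iff.mp hop).1
    simp only [Spec.Translation.linEntry, List.getElem?_append_left hlt]
  refine ⟨tl.map (T.linEntry (α ++ β)), ?_⟩
  rw [translateLin, translateLin, happ, ← htl, List.map_append, List.map_congr_left hagree]

end Linearization

end Translation

section Contest

variable {n : ℕ}

def contestViaQueue (n : ℕ) : Spec.Translation (ContestSpec n) (QueueSpec n) where
  op i
    | .compete => some i.val
    | .decide => none
  res i r := if i.val = 0 then r.elim (.inl false) .inr else .inl true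
  allowed_op _ _ _ _ := rfl

instance : Inhabited (ContestSpec n).Res := ⟨.inl false⟩

def ContestOp.ofProc (i : Fin n) : ContestOp :=
  if i.val = 0 then .decide else .compete

theorem ContestSpec.oneShot : (ContestSpec n).OneShot := by
  intro i hist op h
  simp only [ContestSpec, Bool.and_eq_true] at h
  exact List.isEmpty_iff.mp h.1

theorem ContestSpec.eq_ofProc_of_allowed {i : Fin n} {hist : List ContestOp} {op : ContestOp}
    (h : (ContestSpec n).allowed i hist op = true) : op = ContestOp.ofProc i := by
  cases op <;> simp_all [ContestSpec, ContestOp.ofProc]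

def contestEntry (e : Fin n × (QueueSpec n).Op × (QueueSpec n).Res) :
    Fin n × (ContestSpec n).Op × (ContestSpec n).Res :=
  (e.1, ContestOp.ofProc e.1, (contestViaQueue n).res e.1 e.2.2)

theorem seqRun_contestEntry_of_competitors
    {l : List (Fin n × (QueueSpec n).Op × (QueueSpec n).Res)} (hl : ∀ e ∈ l, e.1.val ≠ 0)
    (s : (ContestSpec n).State) :
    SeqRun (ContestSpec n) s (l.map contestEntry) := by
  induction l generalizing s with
  | nil => exact .nil s
  | cons e l ih =>
    have he := hl e List.mem_cons_self
    refine .cons (s' := (match s.1 with | some j => some j | none => some e.1, s.2))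
      (.inl ⟨?_, he, ?_, rfl, rfl⟩)
      (ih (fun e' he' => hl e' (List.mem_cons_of_mem _ he')) _)
    · simp [ContestOp.ofProc, he]
    · simp [contestViaQueue, he]

theorem QueueSpec.eq_head?_of_dequeue {s s' : List ℕ} {i : Fin n} {r : (QueueSpec n).Res}
    (h : (QueueSpec n).δ s i none s' r) : r = s.head? := by
  rcases h with ⟨v, hv, -⟩ | ⟨-, ⟨rfl, -, rfl⟩ | ⟨v, t, rfl, -, rfl⟩⟩
  · cases hv
  · rfl
  · rfl

theorem QueueSpec.eq_of_enqueue {s s' : List ℕ} {i : Fin n} {v : ℕ}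
    {r : (QueueSpec n).Res} (h : (QueueSpec n).δ s i (some v) s' r) :
    s' = s ++ [v] ∧ r = none := by
  rcases h with ⟨v', hv, rfl, rfl⟩ | ⟨hv, -⟩
  · cases hv; exact ⟨rfl, rfl⟩
  · cases hv

/-- The contest winner is the head of the queue until the referee dequeues it. -/
theorem seqRun_contestEntry_of_queue {s : (QueueSpec n).State}
    {l : List (Fin n × (QueueSpec n).Op × (QueueSpec n).Res)} (hrun : SeqRun (QueueSpec n) s l)
    (hop : ∀ e ∈ l, e.2.1 = (contestViaQueue n).op e.1 (ContestOp.ofProc e.1))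
    (hproc : l.Pairwise fun a b => a.1 ≠ b.1) {c : Option (Fin n)}
    (hc : List.head? s = c.map Fin.val) :
    SeqRun (ContestSpec n) (c, false) (l.map contestEntry) := by
  induction hrun generalizing c with
  | nil => exact .nil _
  | @cons s i op s' r l hδ _ ih =>
    rw [List.pairwise_cons] at hproc
    have hop_i : op = (contestViaQueue n).op i (ContestOp.ofProc i) := hop _ List.mem_cons_self
    by_cases hi : i.val = 0
    · obtain rfl : op = none := by simpa [ContestOp.ofProc, hi, contestViaQueue] using hop_i
      have hr : r = c.map Fin.val := hc ▸ QueueSpec.eq_head?_of_dequeue hδ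
      have hl : ∀ e ∈ l, e.1.val ≠ 0 := fun e he h0 =>
        hproc.1 e he (Fin.ext (hi.trans h0.symm))
      refine .cons (s' := (c, true)) (.inr ⟨?_, hi, rfl, rfl, ?_⟩)
        (seqRun_contestEntry_of_competitors hl _)
      · simp [ContestOp.ofProc, hi]
      · subst hr
        cases c <;> simp [contestViaQueue, hi] <;> rfl
    · obtain rfl : op = some i.val := by simpa [ContestOp.ofProc, hi, contestViaQueue] using hop_i
      obtain ⟨rfl, rfl⟩ := QueueSpec.eq_of_enqueue hδ
      refine .cons (s' := (c.or (some i), false)) (.inl ⟨?_, hi, ?_, rfl, by cases c <;> rfl⟩)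
        (ih (fun e he => hop e (List.mem_cons_of_mem _ he)) hproc.2 ?_)
      · simp [ContestOp.ofProc, hi]
      · simp [contestViaQueue, hi]
      · revert hc
        cases s <;> cases c <;> simp

theorem isLinFun_translateLin_contestViaQueue {ι : Type} {M : ι → BaseObject}
    {B : Impl n (QueueSpec n) ι M}
    {LB : List (Event n (QueueSpec n)) → List (ℕ × (QueueSpec n).Res)}
    (hLB : IsLinFun B LB) :
    IsLinFun (B.translate (contestViaQueue n)) (B.translateLin (contestViaQueue n) LB) := by
  intro α hα
  obtain ⟨hφ, hF⟩ := hα.baseExec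
  have H := hLB _ hφ
  refine (contestViaQueue n).isLinearization_map_linEntry hF H ?_
  obtain ⟨lB, hlB, hrun⟩ := H.valid
  have hrole : ∀ (p : ℕ × (QueueSpec n).Res)
      (e : Fin n × (QueueSpec n).Op × (QueueSpec n).Res),
      (B.baseExec (contestViaQueue n) α)[p.1]? = some (.inv e.1 e.2.1) →
      α[p.1]? = some (.inv e.1 (ContestOp.ofProc e.1)) ∧
        e.2.1 = (contestViaQueue n).op e.1 (ContestOp.ofProc e.1) := by
    intro p e he
    obtain ⟨op, hop, hq⟩ := Spec.Translation.EventRel.getElem?_inv_rev hF he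
    obtain ⟨hist, hall⟩ := hα.allowed_of_getElem? hop
    rw [ContestSpec.eq_ofProc_of_allowed hall] at hop hq
    exact ⟨hop, hq⟩
  refine ⟨lB.map contestEntry, ?_, seqRun_contestEntry_of_queue hrun ?_ ?_ rfl⟩
  · rw [List.forall₂_map_left_iff, List.forall₂_map_right_iff]
    refine hlB.imp fun p e ⟨he, hpe⟩ => ?_
    have hp := (hrole p e he).1
    exact ⟨hp, by simp [Spec.Translation.linEntry_of_getElem? hp, contestEntry, hpe]⟩
  · intro e he
    obtain ⟨p, -, he', -⟩ := hlB.exists_mem_left he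
    exact (hrole p e he').2
  · refine hlB.pairwise (List.pairwise_map.mp H.nodup) ?_
    rintro p q x y ⟨hx, -⟩ ⟨hy, -⟩ hpq hxy
    have hpx := (hrole p x hx).1
    rw [hxy] at hpx
    exact hpq (ContestSpec.oneShot.eq_of_getElem?_inv hα hpx (hrole q y hy).1)

end Contest

/-- A single instance of any lock-free strongly linearizable queue
implementation can be used to obtain a wait-free strongly linearizable implementation
of the one-shot contest object, for `n ≥ 2` processes: whenever there is a lock-free
strongly linearizable queue implementation from the base objects `M`, there is a
wait-free strongly linearizable implementation of the one-shot contest object from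
the same base objects. -/
theorem contest_from_lockfree_strongly_linearizable_queue :
    ∀ (n : ℕ), 2 ≤ n →
    ∀ (ι : Type) (M : ι → BaseObject) (B : Impl n (QueueSpec n) ι M),
      LockFree B → StronglyLinearizable B →
      ∃ A : Impl n (ContestSpec n) ι M, WaitFree A ∧ StronglyLinearizable A := by
  intro n _ ι M B hLF ⟨LB, hLB, hpc⟩
  exact ⟨B.translate (contestViaQueue n), ContestSpec.oneShot.waitFree_of_lockFree hLF.translate,
    B.translateLin (contestViaQueue n) LB, isLinFun_translateLin_contestViaQueue hLB,
    B.prefixClosedLin_translateLin hLB hpc⟩
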